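/- arXiv:1706.04844 — 6 statements merged into one kernel-verified Lean document; each statement's English description precedes it below -/
import Mathlib

section
/- A symmetrically totally monotone function f on (0,T) is completely monotone on (0,T/2) (i.e., (-1)^n f^{(n)}(x) ≥ 0 for all x ∈ (0,T/2) and all n ≥ 0) and absolutely monotone on (T/2,T) (i.e., f^{(n)}(x) ≥ 0 for all x ∈ (T/2,T) and all n ≥ 0). -/
/-!
Write the even series as a power series `∑ b k * (x - T/2) ^ k` with nonnegative coefficients.
For `x ≥ T/2`, the `n`-th derivative at `x` is `n!` times the `n`-th coefficient of the series
re-expanded around `x`, and re-expanding around a point to the right of the centre only adds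
products of nonnegative numbers. The symmetry `f (T - x) = f x` carries this to `(0, T/2)`,
where differentiating the reflection contributes the sign `(-1) ^ n`.
-/

/-- A function `f : (0,T) → ℝ` is symmetrically totally monotone if it is analytic on `(0,T)`
and its power series development around `T/2` has the form `∑ a_{2n} (x - T/2)^(2n)` with
nonnegative coefficients. -/
def SymmTotallyMonotone (T : ℝ) (f : ℝ → ℝ) : Prop :=
  AnalyticOnNhd ℝ f (Set.Ioo 0 T) ∧
    ∃ a : ℕ → ℝ, (∀ n, 0 ≤ a n) ∧
      ∀ x ∈ Set.Ioo 0 T, HasSum (fun n => a n * (x - T / 2) ^ (2 * n)) (f x)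

open FormalMultilinearSeries Set
open scoped ENNReal

namespace FormalMultilinearSeries

variable {b : ℕ → ℝ} {y : ℝ}

lemma changeOriginSeries_ofScalars_apply_one_nonneg (hb : ∀ k, 0 ≤ b k) (hy : 0 ≤ y)
    (n l : ℕ) : 0 ≤ ((ofScalars ℝ b).changeOriginSeries n l fun _ => y) fun _ => 1 := by
  simp only [changeOriginSeries, sum_apply]
  refine Finset.sum_nonneg fun s _ => ?_
  rw [changeOriginSeriesTerm_apply]
  simp only [ofScalars, _root_.smul_apply, ContinuousMultilinearMap.mkPiAlgebraFin_apply,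
    List.prod_ofFn, smul_eq_mul]
  refine mul_nonneg (hb _) (Finset.prod_nonneg fun i _ => ?_)
  by_cases h : i ∈ s.1 <;> simp [Finset.piecewise, h, hy]

lemma changeOrigin_ofScalars_apply_one_nonneg (hb : ∀ k, 0 ≤ b k) (hy : 0 ≤ y) (n : ℕ) :
    0 ≤ (ofScalars ℝ b).changeOrigin y n fun _ => 1 := by
  by_cases hs : Summable fun l => (ofScalars ℝ b).changeOriginSeries n l fun _ => y
  · rw [changeOrigin, FormalMultilinearSeries.sum,
      ← ContinuousMultilinearMap.apply_apply (𝕜 := ℝ), ContinuousLinearMap.map_tsum _ hs]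
    exact tsum_nonneg fun l => changeOriginSeries_ofScalars_apply_one_nonneg hb hy n l
  · rw [changeOrigin, FormalMultilinearSeries.sum, tsum_eq_zero_of_not_summable hs]
    simp

end FormalMultilinearSeries

theorem HasFPowerSeriesOnBall.iteratedDeriv_nonneg_of_ofScalars {f : ℝ → ℝ} {b : ℕ → ℝ}
    {c x : ℝ} {r : ℝ≥0∞} (hf : HasFPowerSeriesOnBall f (ofScalars ℝ b) c r)
    (hb : ∀ k, 0 ≤ b k) (hcx : c ≤ x) (hxr : ENNReal.ofReal (x - c) < r) (n : ℕ) :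
    0 ≤ iteratedDeriv n f x := by
  have hy : (‖x - c‖₊ : ℝ≥0∞) < r := by
    rwa [← enorm_eq_nnnorm, ← ofReal_norm, Real.norm_of_nonneg (sub_nonneg.2 hcx)]
  have hx := (hf.changeOrigin hy).factorial_smul 1 n
  rw [add_sub_cancel] at hx
  rw [iteratedDeriv_eq_iteratedFDeriv, ← hx]
  exact nsmul_nonneg (changeOrigin_ofScalars_apply_one_nonneg hb (sub_nonneg.2 hcx) n) _

theorem hasFPowerSeriesOnBall_ofScalars_of_hasSum {f : ℝ → ℝ} {b : ℕ → ℝ} {c r : ℝ} (hr : 0 < r)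
    (hf : ∀ z, |z| < r → HasSum (fun k => b k * z ^ k) (f (c + z))) :
    HasFPowerSeriesOnBall f (ofScalars ℝ b) c (ENNReal.ofReal r) where
  r_le := by
    refine ENNReal.le_of_forall_nnreal_lt fun r' hr' =>
      (ofScalars ℝ b).le_radius_of_tendsto (l := 0) ?_
    have hr'r : (r' : ℝ) < r := by
      rwa [← ENNReal.ofReal_coe_nnreal, ENNReal.ofReal_lt_ofReal_iff hr] at hr'
    have hterms := (hf r' (by rwa [abs_of_nonneg r'.coe_nonneg])).summable.tendsto_atTop_zero
    simpa [ofScalars_norm, norm_mul, norm_pow] using hterms.norm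
  r_pos := ENNReal.ofReal_pos.2 hr
  hasSum {y} hy := by
    rw [Metric.mem_eball, edist_zero_right, ← ofReal_norm, ENNReal.ofReal_lt_ofReal_iff hr] at hy
    simpa [ofScalars_apply_eq', mul_comm] using hf y hy

def evenCoeffs {R : Type*} [Zero R] (a : ℕ → R) (k : ℕ) : R := if Even k then a (k / 2) else 0

lemma hasSum_evenCoeffs_mul_pow_iff {R : Type*} [Semiring R] [TopologicalSpace R] {a : ℕ → R}
    {z s : R} :
    HasSum (fun k => evenCoeffs a k * z ^ k) s ↔ HasSum (fun m => a m * z ^ (2 * m)) s := by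
  have hodd : ∀ k ∉ range (2 * ·), evenCoeffs a k * z ^ k = 0 := fun k hk => by
    have : ¬Even k := fun ⟨m, hm⟩ => hk ⟨m, by dsimp only; omega⟩
    simp [evenCoeffs, this]
  rw [← (mul_right_injective₀ two_ne_zero).hasSum_iff hodd]
  simp [Function.comp_def, evenCoeffs]

namespace SymmTotallyMonotone

variable {T : ℝ} {f : ℝ → ℝ}

lemma apply_const_sub (hf : SymmTotallyMonotone T f) {x : ℝ} (hx : x ∈ Ioo 0 T) :
    f (T - x) = f x := by
  obtain ⟨-, a, -, hsum⟩ := hf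
  have hx' : T - x ∈ Ioo 0 T := ⟨by linarith [hx.2], by linarith [hx.1]⟩
  refine (hsum _ hx').unique ?_
  convert hsum x hx using 2 with m
  rw [show T - x - T / 2 = -(x - T / 2) by ring, (even_two_mul m).neg_pow]

lemma iteratedDeriv_nonneg (hf : SymmTotallyMonotone T f) (n : ℕ) {x : ℝ}
    (hx : x ∈ Ioo (T / 2) T) : 0 ≤ iteratedDeriv n f x := by
  obtain ⟨-, a, ha, hsum⟩ := hf
  have hT : 0 < T / 2 := by linarith [hx.1, hx.2]
  have hps : HasFPowerSeriesOnBall f (ofScalars ℝ (evenCoeffs a)) (T / 2) (.ofReal (T / 2)) := by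
    refine hasFPowerSeriesOnBall_ofScalars_of_hasSum hT fun z hz => ?_
    rw [abs_lt] at hz
    rw [hasSum_evenCoeffs_mul_pow_iff]
    simpa using hsum (T / 2 + z) ⟨by linarith, by linarith⟩
  refine hps.iteratedDeriv_nonneg_of_ofScalars (fun k => ?_) hx.1.le ?_ n
  · by_cases hk : Even k <;> simp [evenCoeffs, hk, ha]
  · exact (ENNReal.ofReal_lt_ofReal_iff hT).2 (by linarith [hx.2])

lemma neg_one_pow_mul_iteratedDeriv_nonneg (hf : SymmTotallyMonotone T f) (n : ℕ) {x : ℝ}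
    (hx : x ∈ Ioo 0 (T / 2)) : 0 ≤ (-1 : ℝ) ^ n * iteratedDeriv n f x := by
  have hx' : x ∈ Ioo 0 T := ⟨hx.1, by linarith [hx.1, hx.2]⟩
  have hsymm : EqOn f (fun z => f (T - z)) (Ioo 0 T) := fun z hz => (hf.apply_const_sub hz).symm
  have hreflect := hsymm.iteratedDeriv_of_isOpen isOpen_Ioo n hx'
  simp only [hreflect, iteratedDeriv_comp_const_sub, smul_eq_mul, ← mul_assoc, ← pow_add,
    Even.neg_one_pow ⟨n, rfl⟩, one_mul]
  exact hf.iteratedDeriv_nonneg n ⟨by linarith [hx.2], by linarith [hx.1]⟩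

end SymmTotallyMonotone

theorem stmt2_general (T : ℝ) (f : ℝ → ℝ) (hf : SymmTotallyMonotone T f) :
    (∀ n : ℕ, ∀ x ∈ Set.Ioo 0 (T / 2), 0 ≤ (-1 : ℝ) ^ n * iteratedDeriv n f x) ∧
      (∀ n : ℕ, ∀ x ∈ Set.Ioo (T / 2) T, 0 ≤ iteratedDeriv n f x) :=
  ⟨fun n _ hx => hf.neg_one_pow_mul_iteratedDeriv_nonneg n hx,
    fun n _ hx => hf.iteratedDeriv_nonneg n hx⟩

/-- A symmetrically totally monotone function on `(0,T)` is completely monotone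
on `(0,T/2)` and absolutely monotone on `(T/2,T)`. -/
theorem stmt2 (T : ℝ) (hT : 0 < T) (f : ℝ → ℝ) (hf : SymmTotallyMonotone T f) :
    (∀ n : ℕ, ∀ x ∈ Set.Ioo 0 (T / 2), 0 ≤ (-1 : ℝ) ^ n * iteratedDeriv n f x) ∧
      (∀ n : ℕ, ∀ x ∈ Set.Ioo (T / 2) T, 0 ≤ iteratedDeriv n f x) :=
  stmt2_general T f hf
end

section
/- Let γ > 0, T > 0, ρ > 0 with ρ(2γ+T) + sin(ρT) ≠ 0, and define φ(t) = (σ/γ)·(1 - 2 tan(ρT/2)(cos(ρt) + cos(ρ(T-t)))/(ρ(2γ+T) + sin(ρT))) for a constant σ. Then φ satisfies γφ(t) + ∫₀ᵀ cos(ρ|t-s|) φ(s) ds = σ for all t ∈ [0,T]. -/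
/-!
The kernel cos(ρ(t - s)) maps the constant 1 to (sin ρt + sin ρ(T - t))/ρ = tan(ρT/2)/ρ · ψ(t),
where ψ(t) = cos ρt + cos ρ(T - t), and ψ is an eigenfunction with eigenvalue (ρT + sin ρT)/(2ρ).
Hence the equation γφ + Kφ = σ is solved by an ansatz φ = (σ/γ)(1 - cψ), and the coefficient c
is fixed by a scalar equation whose denominator is γ plus the eigenvalue.
-/

open Real MeasureTheory

lemma sin_add_sin_sub_eq_tan_mul (x y : ℝ) (h : cos (x / 2) ≠ 0) :
    sin y + sin (x - y) = tan (x / 2) * (cos y + cos (x - y)) := by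
  rw [sin_add_sin, cos_add_cos, tan_eq_sin_div_cos]
  field_simp
  ring_nf

lemma cos_mul_abs (ρ x : ℝ) : cos (ρ * |x|) = cos (ρ * x) := by
  rcases abs_choice x with h | h <;> simp [h]

lemma integral_cos_mul_add (a b α β : ℝ) (hα : α ≠ 0) :
    ∫ s in a..b, cos (α * s + β) = (sin (α * b + β) - sin (α * a + β)) / α := by
  rw [intervalIntegral.integral_comp_mul_add _ hα, integral_cos, smul_eq_mul, inv_mul_eq_div]

lemma integral_cos_mul_sub (ρ T t : ℝ) (hρ : ρ ≠ 0) :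
    ∫ s in (0)..T, cos (ρ * (t - s)) = (sin (ρ * t) + sin (ρ * (T - t))) / ρ := by
  simp_rw [show ∀ s, ρ * (t - s) = -ρ * s + ρ * t by intro s; ring]
  rw [integral_cos_mul_add _ _ _ _ (neg_ne_zero.mpr hρ),
    show -ρ * T + ρ * t = -(ρ * (T - t)) by ring, sin_neg]
  field_simp
  ring_nf

lemma integral_cos_mul_sub_mul_cos_mul_sub (ρ T t u : ℝ) (hρ : ρ ≠ 0) :
    ∫ s in (0)..T, cos (ρ * (t - s)) * cos (ρ * (s - u)) =
      T / 2 * cos (ρ * (t - u)) + (sin (ρ * (t + u)) - sin (ρ * (t + u - 2 * T))) / (4 * ρ) := by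
  have hprod : ∀ s, cos (ρ * (t - s)) * cos (ρ * (s - u)) =
      cos (ρ * (t - u)) / 2 + cos (-(2 * ρ) * s + ρ * (t + u)) / 2 := by
    intro s
    have := two_mul_cos_mul_cos (ρ * (t - s)) (ρ * (s - u))
    rw [show ρ * (t - s) + ρ * (s - u) = ρ * (t - u) by ring,
      show ρ * (t - s) - ρ * (s - u) = -(2 * ρ) * s + ρ * (t + u) by ring] at this
    linarith
  simp_rw [hprod]
  rw [intervalIntegral.integral_add intervalIntegrable_const
      (by apply Continuous.intervalIntegrable; fun_prop),
    intervalIntegral.integral_const, intervalIntegral.integral_div,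
    integral_cos_mul_add _ _ _ _ (by simpa using hρ),
    show -(2 * ρ) * T + ρ * (t + u) = ρ * (t + u - 2 * T) by ring]
  field_simp
  ring_nf

lemma integral_cos_mul_sub_mul_cos_add_cos (ρ T t : ℝ) (hρ : ρ ≠ 0) :
    ∫ s in (0)..T, cos (ρ * (t - s)) * (cos (ρ * s) + cos (ρ * (T - s))) =
      (ρ * T + sin (ρ * T)) / (2 * ρ) * (cos (ρ * t) + cos (ρ * (T - t))) := by
  have hsym : ∀ s, cos (ρ * s) + cos (ρ * (T - s)) = cos (ρ * (s - 0)) + cos (ρ * (s - T)) := by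
    intro s
    rw [sub_zero, ← cos_neg (ρ * (s - T))]
    ring_nf
  simp_rw [hsym, mul_add]
  rw [intervalIntegral.integral_add (by apply Continuous.intervalIntegrable; fun_prop)
      (by apply Continuous.intervalIntegrable; fun_prop),
    integral_cos_mul_sub_mul_cos_mul_sub _ _ _ _ hρ,
    integral_cos_mul_sub_mul_cos_mul_sub _ _ _ _ hρ]
  have h₁ : sin (ρ * (t + 0)) - sin (ρ * (t + 0 - 2 * T)) =
      2 * sin (ρ * T) * cos (ρ * (T - t)) := by
    rw [sin_sub_sin, ← cos_neg]
    ring_nf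
  have h₂ : sin (ρ * (t + T)) - sin (ρ * (t + T - 2 * T)) = 2 * sin (ρ * T) * cos (ρ * t) := by
    rw [sin_sub_sin]
    ring_nf
  rw [h₁, h₂, sub_zero, show cos (ρ * (t - T)) = cos (ρ * (T - t)) by rw [← cos_neg]; ring_nf]
  field_simp
  ring

lemma fredholm_eq_of_eigenfunction {α : Type*} [MeasurableSpace α] {μ : Measure α} {k ψ : α → ℝ}
    {γ σ a e x : ℝ} (hγ : γ ≠ 0) (hγe : γ + e ≠ 0) (hk : Integrable k μ)
    (hkψ : Integrable (fun s => k s * ψ s) μ) (h₁ : ∫ s, k s ∂μ = a * x)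
    (hψ : ∫ s, k s * ψ s ∂μ = e * x) :
    γ * (σ / γ * (1 - a / (γ + e) * x)) + ∫ s, k s * (σ / γ * (1 - a / (γ + e) * ψ s)) ∂μ = σ := by
  have hlin : ∀ s, k s * (σ / γ * (1 - a / (γ + e) * ψ s)) =
      σ / γ * (k s - a / (γ + e) * (k s * ψ s)) := fun s => by ring
  simp_rw [hlin]
  rw [integral_const_mul, integral_sub hk (hkψ.const_mul _), integral_const_mul, h₁, hψ]
  field_simp
  ring

/-- the explicit solution of the Fredholm equation for the trigonometric
kernel `G(t) = cos(ρ t)`. -/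
theorem stmt8 (γ T ρ σ : ℝ) (hγ : 0 < γ) (hT : 0 < T) (hρ : 0 < ρ)
    (hcos : Real.cos (ρ * T / 2) ≠ 0)
    (hden : ρ * (2 * γ + T) + Real.sin (ρ * T) ≠ 0)
    (φ : ℝ → ℝ)
    (hφ : φ = fun t => σ / γ *
      (1 - 2 * Real.tan (ρ * T / 2) * (Real.cos (ρ * t) + Real.cos (ρ * (T - t))) /
        (ρ * (2 * γ + T) + Real.sin (ρ * T)))) :
    ∀ t ∈ Set.Icc (0 : ℝ) T,
      γ * φ t + ∫ s in Set.Ioc 0 T, Real.cos (ρ * |t - s|) * φ s = σ := by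
  intro t _
  set e := (ρ * T + sin (ρ * T)) / (2 * ρ)
  have hγe : γ + e = (ρ * (2 * γ + T) + sin (ρ * T)) / (2 * ρ) := by
    simp only [e]; field_simp; ring
  have hφ' : φ = fun s => σ / γ * (1 - tan (ρ * T / 2) / ρ / (γ + e) *
      (cos (ρ * s) + cos (ρ * (T - s)))) := by
    rw [hφ, hγe]
    funext s
    field_simp
  have hkernel : ∫ s in Set.Ioc 0 T, cos (ρ * (t - s)) =
      tan (ρ * T / 2) / ρ * (cos (ρ * t) + cos (ρ * (T - t))) := by
    rw [← intervalIntegral.integral_of_le hT.le, integral_cos_mul_sub _ _ _ hρ.ne', mul_sub,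
      sin_add_sin_sub_eq_tan_mul _ _ hcos]
    ring
  have heigen : ∫ s in Set.Ioc 0 T, cos (ρ * (t - s)) * (cos (ρ * s) + cos (ρ * (T - s))) =
      e * (cos (ρ * t) + cos (ρ * (T - t))) := by
    rw [← intervalIntegral.integral_of_le hT.le, integral_cos_mul_sub_mul_cos_add_cos _ _ _ hρ.ne']
  simp_rw [hφ', cos_mul_abs]
  exact fredholm_eq_of_eigenfunction hγ.ne' (by rw [hγe]; exact div_ne_zero hden (by positivity))
    (by apply Continuous.integrableOn_Ioc; fun_prop)
    (by apply Continuous.integrableOn_Ioc; fun_prop)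
    hkernel heigen
end

section
/- Let γ > 0, b > 0, T > 0, c = b + (2/γ)√b, and define φ(t) = (σb/(γc))·(1 + 2(e^{√c t} + e^{√c (T-t)})/(γ(e^{√c T}(√b + √c) + √b - √c))). Then φ satisfies γφ(t) + ∫₀ᵀ e^{-√b |t-s|} φ(s) ds = σ for all t ∈ [0,T]. -/
open Real intervalIntegral

private lemma int_exp_aux (a u v : ℝ) (ha : a ≠ 0) :
    ∫ x in u..v, Real.exp (a * x) = (Real.exp (a * v) - Real.exp (a * u)) / a := by
  have h : ∀ x ∈ Set.uIcc u v,
      HasDerivAt (fun x => Real.exp (a * x) / a) (Real.exp (a * x)) x := by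
    intro x _
    have h1 : HasDerivAt (fun x : ℝ => a * x) a x := by
      simpa using (hasDerivAt_id x).const_mul a
    have h2 := (h1.exp).div_const a
    simpa [mul_comm, mul_div_assoc, mul_div_cancel_left₀ _ ha] using h2
  rw [intervalIntegral.integral_eq_sub_of_hasDerivAt h
    ((Real.continuous_exp.comp (continuous_const.mul continuous_id)).intervalIntegrable u v)]
  ring

private lemma int3_aux (c1 a1 c2 a2 c3 a3 u v : ℝ) (h1 : a1 ≠ 0) (h2 : a2 ≠ 0) (h3 : a3 ≠ 0) :
    ∫ x in u..v, (c1 * Real.exp (a1 * x) + c2 * Real.exp (a2 * x) + c3 * Real.exp (a3 * x)) =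
      c1 * (Real.exp (a1 * v) - Real.exp (a1 * u)) / a1 +
      c2 * (Real.exp (a2 * v) - Real.exp (a2 * u)) / a2 +
      c3 * (Real.exp (a3 * v) - Real.exp (a3 * u)) / a3 := by
  have i1 : IntervalIntegrable (fun x => c1 * Real.exp (a1 * x)) MeasureTheory.volume u v :=
    (continuous_const.mul (Real.continuous_exp.comp (continuous_const.mul continuous_id))).intervalIntegrable u v
  have i2 : IntervalIntegrable (fun x => c2 * Real.exp (a2 * x)) MeasureTheory.volume u v :=
    (continuous_const.mul (Real.continuous_exp.comp (continuous_const.mul continuous_id))).intervalIntegrable u v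
  have i3 : IntervalIntegrable (fun x => c3 * Real.exp (a3 * x)) MeasureTheory.volume u v :=
    (continuous_const.mul (Real.continuous_exp.comp (continuous_const.mul continuous_id))).intervalIntegrable u v
  rw [intervalIntegral.integral_add (i1.add i2) i3, intervalIntegral.integral_add i1 i2,
    intervalIntegral.integral_const_mul, intervalIntegral.integral_const_mul,
    intervalIntegral.integral_const_mul, int_exp_aux a1 u v h1, int_exp_aux a2 u v h2,
    int_exp_aux a3 u v h3]
  ring

set_option maxHeartbeats 2000000 in
private lemma alg_aux (β g σ x y X Y : ℝ) (hβ : 0 < β) (hβg : β < g)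
    (hx : x ≠ 0) (hy : y ≠ 0) (hX : X ≠ 0) (hY : Y ≠ 0)
    (hE : Y * (β + g) + β - g ≠ 0) :
    σ*β^2/g^2 + σ*β*(g^2-β^2)*(y+Y/y)/(g^2*(Y*(β+g)+β-g))
    + ((σ*β*(g^2-β^2)/(2*g^2))/x*(x-1)/β
      + (σ*(g^2-β^2)^2/(2*g^2*(Y*(β+g)+β-g)))/x*(x*y-1)/(β+g)
      + (σ*(g^2-β^2)^2/(2*g^2*(Y*(β+g)+β-g)))*Y/x*(x/y-1)/(β-g))
    + ((σ*β*(g^2-β^2)/(2*g^2))*x*(1/X-1/x)/(-β)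
      + (σ*(g^2-β^2)^2/(2*g^2*(Y*(β+g)+β-g)))*x*(Y/X-y/x)/(g-β)
      + (σ*(g^2-β^2)^2/(2*g^2*(Y*(β+g)+β-g)))*x*Y*(1/(X*Y)-1/(x*y))/(-(g+β)))
    = σ := by
  have h1 : β ≠ 0 := hβ.ne'
  have h2 : β + g ≠ 0 := by nlinarith
  have h3 : g - β ≠ 0 := by intro h; nlinarith
  have h5 : g ≠ 0 := by intro h; nlinarith
  obtain ⟨E, hEd⟩ : ∃ E : ℝ, E = Y * (β + g) + β - g := ⟨_, rfl⟩
  rw [show Y * (β + g) + β - g = E from hEd.symm]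
  obtain ⟨P0, hP0⟩ : ∃ P0 : ℝ, P0 = σ*β^2/g^2 + (σ*β*(g^2-β^2)/(2*g^2))/x*(x-1)/β
      - (σ*β*(g^2-β^2)/(2*g^2))*x*(1/X-1/x)/β := ⟨_, rfl⟩
  obtain ⟨P1, hP1⟩ : ∃ P1 : ℝ, P1 = σ*β*(g^2-β^2)*(y+Y/y)/g^2
      + (σ*(g^2-β^2)^2/(2*g^2))/x*(x*y-1)/(β+g)
      - (σ*(g^2-β^2)^2/(2*g^2))*Y/x*(x/y-1)/(g-β)
      + (σ*(g^2-β^2)^2/(2*g^2))*x*(Y/X-y/x)/(g-β)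
      - (σ*(g^2-β^2)^2/(2*g^2))*x*Y*(1/(X*Y)-1/(x*y))/(β+g) := ⟨_, rfl⟩
  have hE : E ≠ 0 := by rw [hEd]; exact hE
  have step1 : σ*β^2/g^2 + σ*β*(g^2-β^2)*(y+Y/y)/(g^2*E)
    + ((σ*β*(g^2-β^2)/(2*g^2))/x*(x-1)/β
      + (σ*(g^2-β^2)^2/(2*g^2*E))/x*(x*y-1)/(β+g)
      + (σ*(g^2-β^2)^2/(2*g^2*E))*Y/x*(x/y-1)/(β-g))
    + ((σ*β*(g^2-β^2)/(2*g^2))*x*(1/X-1/x)/(-β)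
      + (σ*(g^2-β^2)^2/(2*g^2*E))*x*(Y/X-y/x)/(g-β)
      + (σ*(g^2-β^2)^2/(2*g^2*E))*x*Y*(1/(X*Y)-1/(x*y))/(-(g+β)))
    = P0 + P1/E := by
    rw [hP0, hP1]
    have e1 : β - g = -(g - β) := by ring
    rw [e1]
    simp only [div_neg, neg_div]
    ring
  rw [step1]
  have step2 : P1 = (σ - P0) * E := by
    rw [hP0, hP1, hEd]
    field_simp
    ring
  rw [step2, mul_div_assoc, div_self hE, mul_one]
  ring

set_option maxHeartbeats 2000000 in
private lemma alg_aux2 (β g γ σ x y X Y : ℝ) (hβ : 0 < β) (hβg : β < g) (hγ : 0 < γ)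
    (hrel : γ * (g^2 - β^2) = 2*β)
    (hx : x ≠ 0) (hy : y ≠ 0) (hX : X ≠ 0) (hY : Y ≠ 0)
    (hE : Y * (β + g) + β - g ≠ 0) :
    γ * (σ*β*(g^2-β^2)/(2*g^2) + σ*(g^2-β^2)^2/(2*g^2*(Y*(β+g)+β-g))*(y + Y/y))
    + ((σ*β*(g^2-β^2)/(2*g^2))/x*(x-1)/β
      + (σ*(g^2-β^2)^2/(2*g^2*(Y*(β+g)+β-g)))/x*(x*y-1)/(β+g)
      + (σ*(g^2-β^2)^2/(2*g^2*(Y*(β+g)+β-g)))*Y/x*(x/y-1)/(β-g))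
    + ((σ*β*(g^2-β^2)/(2*g^2))*x*(1/X-1/x)/(-β)
      + (σ*(g^2-β^2)^2/(2*g^2*(Y*(β+g)+β-g)))*x*(Y/X-y/x)/(g-β)
      + (σ*(g^2-β^2)^2/(2*g^2*(Y*(β+g)+β-g)))*x*Y*(1/(X*Y)-1/(x*y))/(-(g+β)))
    = σ := by
  have hgpos : 0 < g := hβ.trans hβg
  have h5 : g ≠ 0 := hgpos.ne'
  have hg2 : (2:ℝ)*g^2 ≠ 0 := mul_ne_zero two_ne_zero (pow_ne_zero 2 h5)
  have hg2' : g^2 ≠ 0 := pow_ne_zero 2 h5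
  have hγK : γ * (σ*β*(g^2-β^2)/(2*g^2)) = σ*β^2/g^2 := by
    rw [show γ * (σ*β*(g^2-β^2)/(2*g^2)) = γ*(σ*β*(g^2-β^2))/(2*g^2) from by ring,
      div_eq_div_iff hg2 hg2']
    linear_combination (σ*β*g^2)*hrel
  have hγM : γ * (σ*(g^2-β^2)^2/(2*g^2*(Y*(β+g)+β-g)))
      = σ*β*(g^2-β^2)/(g^2*(Y*(β+g)+β-g)) := by
    rw [show γ * (σ*(g^2-β^2)^2/(2*g^2*(Y*(β+g)+β-g)))
        = γ*(σ*(g^2-β^2)^2)/(2*g^2*(Y*(β+g)+β-g)) from by ring,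
      div_eq_div_iff (mul_ne_zero hg2 hE) (mul_ne_zero hg2' hE)]
    linear_combination (σ*(g^2-β^2)*(g^2*(Y*(β+g)+β-g)))*hrel
  rw [show γ * (σ*β*(g^2-β^2)/(2*g^2) + σ*(g^2-β^2)^2/(2*g^2*(Y*(β+g)+β-g))*(y + Y/y))
      = γ*(σ*β*(g^2-β^2)/(2*g^2)) + γ*(σ*(g^2-β^2)^2/(2*g^2*(Y*(β+g)+β-g)))*(y+Y/y)
      from by ring, hγK, hγM]
  linear_combination alg_aux β g σ x y X Y hβ hβg hx hy hX hY hE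

set_option maxHeartbeats 4000000 in
/-- the explicit solution of the Fredholm equation for the exponential kernel
`G(t) = e^{-√b t}`, with `c = b + (2/γ)√b`. -/
theorem stmt9 (γ b T σ : ℝ) (hγ : 0 < γ) (hb : 0 < b) (hT : 0 < T)
    (c : ℝ) (hc : c = b + 2 / γ * Real.sqrt b)
    (φ : ℝ → ℝ)
    (hφ : φ = fun t => σ * b / (γ * c) *
      (1 + 2 * (Real.exp (Real.sqrt c * t) + Real.exp (Real.sqrt c * (T - t))) /
        (γ * (Real.exp (Real.sqrt c * T) * (Real.sqrt b + Real.sqrt c) +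
          Real.sqrt b - Real.sqrt c)))) :
    ∀ t ∈ Set.Icc (0 : ℝ) T,
      γ * φ t + ∫ s in Set.Ioc 0 T, Real.exp (-(Real.sqrt b) * |t - s|) * φ s = σ := by
  intro t ht
  obtain ⟨ht0, htT⟩ := ht
  simp only [hφ]
  set β := Real.sqrt b with hβd
  set g := Real.sqrt c with hgd
  have hβpos : 0 < β := Real.sqrt_pos.mpr hb
  have hcpos : 0 < c := by
    rw [hc]; positivity
  have hbc : b < c := by
    have h2 : 0 < 2 / γ * β := mul_pos (by positivity) hβpos
    rw [hc]; linarith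
  have hβ2 : β ^ 2 = b := Real.sq_sqrt hb.le
  have hg2 : g ^ 2 = c := Real.sq_sqrt hcpos.le
  have hβg : β < g := Real.sqrt_lt_sqrt hb.le hbc
  have hgpos : 0 < g := lt_trans hβpos hβg
  have hγne : γ ≠ 0 := hγ.ne'
  have hrel : γ * (g^2 - β^2) = 2*β := by
    rw [hg2, hc, ← hβ2]
    field_simp
    ring
  rw [show b = β^2 by rw [← hβ2], show c = g^2 by rw [← hg2]]
  rw [← intervalIntegral.integral_of_le hT.le]
  have hEpos : 0 < Real.exp (g*T)*(β+g)+β-g := by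
    have h1 : (1:ℝ) ≤ Real.exp (g*T) := Real.one_le_exp (mul_nonneg hgpos.le hT.le)
    nlinarith
  have hEne : Real.exp (g*T)*(β+g)+β-g ≠ 0 := hEpos.ne'
  have hbody : ∀ u v : ℝ, σ*β^2/(γ*g^2) * (1 + 2*(u+v)/(γ*(Real.exp (g*T)*(β+g)+β-g)))
      = σ*β*(g^2-β^2)/(2*g^2)
        + σ*(g^2-β^2)^2/(2*g^2*(Real.exp (g*T)*(β+g)+β-g))*(u+v) := by
    have hg2ne : (2:ℝ)*g^2 ≠ 0 := mul_ne_zero two_ne_zero (pow_ne_zero 2 hgpos.ne')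
    have hγg2 : γ*g^2 ≠ 0 := mul_ne_zero hγne (pow_ne_zero 2 hgpos.ne')
    have hsmall1 : σ*β^2/γ/g^2 = σ*β*(g^2-β^2)/2/g^2 := by
      rw [div_div, div_div, div_eq_div_iff hγg2 hg2ne]
      linear_combination (-(σ*β*g^2))*hrel
    have hsmall2 : 2*(σ*β^2/γ/g^2)/γ = σ*(g^2-β^2)^2/2/g^2 := by
      rw [show 2*(σ*β^2/γ/g^2)/γ = (2*σ*β^2)/(γ*g^2*γ) from by ring,
        show σ*(g^2-β^2)^2/2/g^2 = σ*(g^2-β^2)^2/(2*g^2) from by ring,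
        div_eq_div_iff (mul_ne_zero hγg2 hγne) hg2ne]
      linear_combination (-(σ*g^2)*(γ*(g^2-β^2)+2*β))*hrel
    intro u v
    simp only [← div_div]
    rw [show σ*β^2/γ/g^2 * (1 + 2*(u+v)/γ/(Real.exp (g*T)*(β+g)+β-g))
        = σ*β^2/γ/g^2
          + (2*(σ*β^2/γ/g^2)/γ)*((u+v)/(Real.exp (g*T)*(β+g)+β-g)) from by ring,
      hsmall2, hsmall1]
    ring
  simp only [hbody]
  have hcont : Continuous fun s : ℝ => Real.exp (-β * |t - s|) *
      (σ*β*(g^2-β^2)/(2*g^2)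
        + σ*(g^2-β^2)^2/(2*g^2*(Real.exp (g*T)*(β+g)+β-g))*(Real.exp (g*s) + Real.exp (g*(T-s)))) := by
    apply Continuous.mul
    · exact Real.continuous_exp.comp (continuous_const.mul (continuous_const.sub continuous_id).abs)
    · apply continuous_const.add
      apply continuous_const.mul
      apply Continuous.add
      · exact Real.continuous_exp.comp (continuous_const.mul continuous_id)
      · exact Real.continuous_exp.comp (continuous_const.mul (continuous_const.sub continuous_id))
  rw [← intervalIntegral.integral_add_adjacent_intervals
    (hcont.intervalIntegrable 0 t) (hcont.intervalIntegrable t T)]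
  have hβne : β ≠ 0 := hβpos.ne'
  have hβgne : β + g ≠ 0 := by positivity
  have hβsgne : β - g ≠ 0 := by intro h; nlinarith
  have hgβne : g - β ≠ 0 := by intro h; nlinarith
  have hngβne : -(g + β) ≠ 0 := by intro h; nlinarith
  have e1 : (∫ s in (0:ℝ)..t, Real.exp (-β * |t - s|) *
      (σ*β*(g^2-β^2)/(2*g^2)
        + σ*(g^2-β^2)^2/(2*g^2*(Real.exp (g*T)*(β+g)+β-g))*(Real.exp (g*s) + Real.exp (g*(T-s))))) =
      ∫ s in (0:ℝ)..t, (σ*β*(g^2-β^2)/(2*g^2) * Real.exp (-(β*t)) * Real.exp (β*s) +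
        σ*(g^2-β^2)^2/(2*g^2*(Real.exp (g*T)*(β+g)+β-g)) * Real.exp (-(β*t)) * Real.exp ((β+g)*s) +
        σ*(g^2-β^2)^2/(2*g^2*(Real.exp (g*T)*(β+g)+β-g)) * Real.exp (-(β*t)) * Real.exp (g*T) * Real.exp ((β-g)*s)) := by
    apply intervalIntegral.integral_congr
    intro s hs
    rw [Set.uIcc_of_le ht0] at hs
    have habs : |t - s| = t - s := abs_of_nonneg (by linarith [hs.2])
    beta_reduce
    rw [habs]
    simp only [show -β * (t - s) = β * s - β * t by ring,
      show g * (T - s) = g * T - g * s by ring,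
      show (β + g) * s = β * s + g * s by ring,
      show (β - g) * s = β * s - g * s by ring,
      show -(β * t) = 0 - β * t by ring,
      Real.exp_add, Real.exp_sub, Real.exp_zero]
    ring
  have e2 : (∫ s in t..T, Real.exp (-β * |t - s|) *
      (σ*β*(g^2-β^2)/(2*g^2)
        + σ*(g^2-β^2)^2/(2*g^2*(Real.exp (g*T)*(β+g)+β-g))*(Real.exp (g*s) + Real.exp (g*(T-s))))) =
      ∫ s in t..T, (σ*β*(g^2-β^2)/(2*g^2) * Real.exp (β*t) * Real.exp (-β*s) +
        σ*(g^2-β^2)^2/(2*g^2*(Real.exp (g*T)*(β+g)+β-g)) * Real.exp (β*t) * Real.exp ((g-β)*s) +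
        σ*(g^2-β^2)^2/(2*g^2*(Real.exp (g*T)*(β+g)+β-g)) * Real.exp (β*t) * Real.exp (g*T) * Real.exp (-(g+β)*s)) := by
    apply intervalIntegral.integral_congr
    intro s hs
    rw [Set.uIcc_of_le htT] at hs
    have habs : |t - s| = s - t := by
      rw [abs_sub_comm]; exact abs_of_nonneg (by linarith [hs.1])
    beta_reduce
    rw [habs]
    simp only [show -β * (s - t) = β * t - β * s by ring,
      show g * (T - s) = g * T - g * s by ring,
      show -β * s = 0 - β * s by ring,
      show (g - β) * s = g * s - β * s by ring,
      show -(g + β) * s = 0 - (β * s + g * s) by ring,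
      Real.exp_add, Real.exp_sub, Real.exp_zero]
    ring
  rw [e1, e2, int3_aux _ _ _ _ _ _ _ _ hβne hβgne hβsgne,
    int3_aux _ _ _ _ _ _ _ _ (neg_ne_zero.mpr hβne) hgβne hngβne]
  simp only [show g*(T-t) = g*T - g*t from by ring, add_mul, sub_mul, neg_mul, mul_zero,
    Real.exp_zero, Real.exp_add, Real.exp_sub, Real.exp_neg]
  linear_combination alg_aux2 β g γ σ (Real.exp (β*t)) (Real.exp (g*t)) (Real.exp (β*T))
    (Real.exp (g*T)) hβpos hβg hγ hrel (Real.exp_ne_zero _) (Real.exp_ne_zero _)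
    (Real.exp_ne_zero _) (Real.exp_ne_zero _) hEne
end

section
/- Let n ≥ 1, a_1,...,a_n > 0, 0 < b_1 < b_2 < ... < b_n, λ > 0, and let M be the n×n matrix M = B + 2λ A B^{1/2} 𝟙𝟙ᵀ, where A = diag(a_i), B = diag(b_i), and 𝟙 = (1,...,1)ᵀ. Then M has n distinct real eigenvalues c_1 < c_2 < ... < c_n satisfying the interlacing b_1 < c_1 < b_2 < c_2 < ... < b_n < c_n. -/
/-!
With `uᵢ = 2λaᵢ√bᵢ > 0` we have `M - x = diag(bᵢ - x) + u 𝟙ᵀ`, so by the matrix determinant lemma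
`det (M - x) = ∏ᵢ (bᵢ - x) + ∑ᵢ uᵢ ∏_{j ≠ i} (bⱼ - x)`.
At `x = b_k` only the `k`-th summand survives, whose sign is `(-1)^k`; for large `x` the sign is
`(-1)^n`, since `(-1)^n det (M - x)` is the monic characteristic polynomial. The intermediate value
theorem gives a root in each of `(b_k, b_{k+1})` and `(b_n, ∞)`, and these `n` roots of a polynomial
of degree `n` are all of its roots.
-/

open Matrix Finset Filter Polynomial

theorem Finset.neg_one_pow_card_filter_neg_mul_prod_pos {ι R : Type*} [CommRing R] [LinearOrder R]
    [IsStrictOrderedRing R] (s : Finset ι) {f : ι → R} (hf : ∀ i ∈ s, f i ≠ 0) :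
    0 < (-1) ^ #{i ∈ s | f i < 0} * ∏ i ∈ s, f i := by
  rw [← prod_filter_mul_prod_filter_not s (f · < 0), ← mul_assoc, ← prod_const, ← prod_mul_distrib]
  refine mul_pos (prod_pos fun i hi => ?_) (prod_pos fun i hi => ?_)
  · simp only [mem_filter] at hi
    linarith [hi.2]
  · simp only [mem_filter, not_lt] at hi
    exact lt_of_le_of_ne hi.2 (hf i hi.1).symm

section Matrix

variable {ι : Type*} [Fintype ι] [DecidableEq ι]

theorem Matrix.det_diagonal_add_vecMulVec_one_of_ne_zero {K : Type*} [Field K] {d : ι → K}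
    (hd : ∀ i, d i ≠ 0) (u : ι → K) :
    (diagonal d + vecMulVec u 1).det = ∏ i, d i + ∑ i, u i * ∏ j ∈ univ.erase i, d j := by
  have hfactor :
      diagonal d + vecMulVec u 1 = diagonal d * (1 + vecMulVec (fun i => u i / d i) 1) := by
    rw [Matrix.mul_add, Matrix.mul_one]
    congr 1
    ext i j
    rw [diagonal_mul, vecMulVec_apply, vecMulVec_apply, ← mul_assoc, mul_div_cancel₀ _ (hd i)]
  rw [hfactor, det_mul, det_diagonal, vecMulVec_eq Unit, det_one_add_replicateCol_mul_replicateRow,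
    mul_add, mul_one, dotProduct, mul_sum]
  congr 1
  refine sum_congr rfl fun i _ => ?_
  rw [← mul_prod_erase univ d (mem_univ i), Pi.one_apply, one_mul]
  field_simp [hd i]

theorem Matrix.det_diagonal_add_vecMulVec_one (d u : ι → ℝ) :
    (diagonal d + vecMulVec u 1).det = ∏ i, d i + ∑ i, u i * ∏ j ∈ univ.erase i, d j := by
  have hdense : Dense {d : ι → ℝ | ∀ i, d i ≠ 0} := by
    simpa [Set.pi] using dense_pi Set.univ fun _ _ => dense_compl_singleton (0 : ℝ)
  refine congrFun (Continuous.ext_on hdense ?_ ?_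
    fun d hd => det_diagonal_add_vecMulVec_one_of_ne_zero hd u) d
  · fun_prop
  · fun_prop

theorem Matrix.neg_one_pow_card_mul_det_sub_smul_one {R : Type*} [CommRing R] (M : Matrix ι ι R)
    (x : R) :
    (-1) ^ Fintype.card ι * (M - x • 1).det = M.charpoly.eval x := by
  rw [eval_charpoly, ← det_neg, neg_sub, scalar_apply, smul_one_eq_diagonal]

end Matrix

theorem Polynomial.eval_eq_zero_iff_of_injective {R : Type*} [CommRing R] [IsDomain R] {p : R[X]}
    (hp : p ≠ 0) {n : ℕ} (hdeg : p.natDegree ≤ n) {c : Fin n → R} (hc : Function.Injective c)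
    (hroots : ∀ i, p.eval (c i) = 0) (x : R) : p.eval x = 0 ↔ ∃ i, x = c i := by
  classical
  refine ⟨fun hx => ?_, fun ⟨i, hi⟩ => hi ▸ hroots i⟩
  by_contra! hne
  have hsub : (insert x (univ.image c)).val ⊆ p.roots := by
    intro z hz
    rw [mem_roots hp]
    simp only [Finset.mem_val, Finset.mem_insert, Finset.mem_image, mem_univ, true_and] at hz
    rcases hz with rfl | ⟨i, rfl⟩
    · exact hx
    · exact hroots i
  have hcard := card_le_degree_of_subset_roots hsub
  rw [card_insert_of_notMem (by simpa [eq_comm] using hne), card_image_of_injective _ hc,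
    card_univ, Fintype.card_fin] at hcard
  omega

theorem exists_interlacing_zeros {n : ℕ} {b : Fin n → ℝ} (hb : StrictMono b) {D : ℝ → ℝ}
    (hD : Continuous D) (hsign : ∀ k : Fin n, 0 < (-1) ^ (k : ℕ) * D (b k))
    (hlarge : ∀ᶠ x in atTop, 0 < (-1) ^ n * D x) :
    ∃ c : Fin n → ℝ, StrictMono c ∧ (∀ i, b i < c i) ∧
      (∀ i j : Fin n, (i : ℕ) + 1 = j → c i < b j) ∧ ∀ i, D (c i) = 0 := by
  have hzero {p q : ℝ} {m : ℕ} (hpq : p ≤ q) (hp : 0 < (-1) ^ m * D p)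
      (hq : 0 < (-1) ^ (m + 1) * D q) : ∃ x ∈ Set.Ioo p q, D x = 0 := by
    have hq' : (-1) ^ m * D q < 0 := by rw [pow_succ] at hq; linarith
    obtain ⟨x, hx, hDx⟩ := intermediate_value_Ioo' hpq
      (continuous_const.mul hD).continuousOn ⟨hq', hp⟩
    exact ⟨x, hx, (mul_eq_zero.1 hDx).resolve_left (pow_ne_zero _ (by norm_num))⟩
  have hexists (k : Fin n) :
      ∃ x, b k < x ∧ (∀ j : Fin n, (k : ℕ) + 1 = j → x < b j) ∧ D x = 0 := by
    by_cases hk : (k : ℕ) + 1 < n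
    · obtain ⟨x, hx, hDx⟩ := hzero (hb.monotone (Fin.le_def.2 (Nat.le_succ _))) (hsign k)
        (hsign ⟨k + 1, hk⟩)
      refine ⟨x, hx.1, fun j hj => ?_, hDx⟩
      obtain rfl : j = ⟨k + 1, hk⟩ := Fin.ext hj.symm
      exact hx.2
    · obtain ⟨X, hX, hbX⟩ := (hlarge.and (eventually_gt_atTop (b k))).exists
      have hkn : (k : ℕ) + 1 = n := by omega
      obtain ⟨x, hx, hDx⟩ := hzero hbX.le (hsign k) (by rwa [hkn])
      exact ⟨x, hx.1, fun j hj => absurd j.isLt (by omega), hDx⟩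
  choose c hbc hcb hDc using hexists
  refine ⟨c, fun i j hij => ?_, hbc, hcb, hDc⟩
  have hi : (i : ℕ) + 1 < n := by have := j.isLt; rw [Fin.lt_def] at hij; omega
  calc c i < b ⟨i + 1, hi⟩ := hcb i _ rfl
    _ ≤ b j := hb.monotone (Fin.le_def.2 hij)
    _ < c j := hbc j

theorem neg_one_pow_mul_det_diagonal_sub_add_vecMulVec_pos {n : ℕ} {b u : Fin n → ℝ}
    (hb : StrictMono b) (hu : ∀ i, 0 < u i) (k : Fin n) :
    0 < (-1) ^ (k : ℕ) * (diagonal (fun i => b i - b k) + vecMulVec u 1).det := by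
  have hcard : #{j ∈ univ.erase k | b j - b k < 0} = k := by
    rw [← Fin.card_Iio k]
    congr 1
    ext j
    simpa [hb.lt_iff_lt] using ne_of_lt
  have hpos := neg_one_pow_card_filter_neg_mul_prod_pos (univ.erase k)
    (f := fun j => b j - b k) fun j hj => sub_ne_zero.2 (hb.injective.ne (ne_of_mem_erase hj))
  rw [hcard] at hpos
  have hsum : ∑ i, u i * ∏ j ∈ univ.erase i, (b j - b k) = u k * ∏ j ∈ univ.erase k, (b j - b k) :=
    sum_eq_single k (fun i _ hik => by
      rw [prod_eq_zero (mem_erase.2 ⟨hik.symm, mem_univ k⟩) (sub_self _), mul_zero]) (by simp)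
  rw [det_diagonal_add_vecMulVec_one, prod_eq_zero (mem_univ k) (sub_self _), zero_add, hsum,
    mul_left_comm]
  exact mul_pos (hu k) hpos

/-- the matrix `M = B + 2λ A B^{1/2} 𝟙𝟙ᵀ` with `A = diag(a)`, `B = diag(b)`,
`0 < b₁ < ⋯ < bₙ`, `aᵢ > 0`, `λ > 0`, has `n` distinct real eigenvalues `c₁ < ⋯ < cₙ`
interlacing the `bᵢ`: `b₁ < c₁ < b₂ < c₂ < ⋯ < bₙ < cₙ`. -/
theorem stmt10 (n : ℕ) (hn : 1 ≤ n) (a b : Fin n → ℝ) (lam : ℝ)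
    (ha : ∀ i, 0 < a i) (hb : ∀ i, 0 < b i) (hbmono : StrictMono b) (hlam : 0 < lam)
    (M : Matrix (Fin n) (Fin n) ℝ)
    (hM : ∀ i j, M i j = (if i = j then b i else 0) + 2 * lam * a i * Real.sqrt (b i)) :
    ∃ c : Fin n → ℝ, StrictMono c ∧
      (∀ i, b i < c i) ∧
      (∀ i j : Fin n, (i : ℕ) + 1 = (j : ℕ) → c i < b j) ∧
      (∀ x : ℝ, (M - x • (1 : Matrix (Fin n) (Fin n) ℝ)).det = 0 ↔ ∃ i, x = c i) := by
  set u : Fin n → ℝ := fun i => 2 * lam * a i * Real.sqrt (b i)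
  have hu (i : Fin n) : 0 < u i := by have := Real.sqrt_pos.2 (hb i); have := ha i; positivity
  have hMx (x : ℝ) : M - x • 1 = diagonal (fun i => b i - x) + vecMulVec u 1 := by
    ext i j
    rw [Matrix.sub_apply, hM, Matrix.smul_apply, one_apply, Matrix.add_apply, diagonal_apply,
      vecMulVec_apply, Pi.one_apply]
    split_ifs <;> simp only [smul_eq_mul] <;> ring
  have hcharpoly (x : ℝ) : (-1) ^ n * (M - x • 1).det = M.charpoly.eval x := by
    simpa using neg_one_pow_card_mul_det_sub_smul_one M x
  have hlarge : ∀ᶠ x : ℝ in atTop, 0 < (-1) ^ n * (M - x • 1).det := by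
    simp_rw [hcharpoly]
    refine (tendsto_atTop_of_leadingCoeff_nonneg _ ?_ ?_).eventually_gt_atTop 0
    · rw [charpoly_degree_eq_dim, Fintype.card_fin]; exact_mod_cast hn
    · rw [(charpoly_monic M).leadingCoeff]; exact zero_le_one
  have hsign (k : Fin n) : 0 < (-1) ^ (k : ℕ) * (M - b k • 1).det := by
    simpa only [hMx] using neg_one_pow_mul_det_diagonal_sub_add_vecMulVec_pos hbmono hu k
  obtain ⟨c, hc, hbc, hcb, hroots⟩ := exists_interlacing_zeros hbmono (by fun_prop) hsign hlarge
  refine ⟨c, hc, hbc, hcb, fun x => ?_⟩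
  have hroot_iff (y : ℝ) : (M - y • 1).det = 0 ↔ M.charpoly.eval y = 0 := by
    rw [← hcharpoly, mul_eq_zero, or_iff_right (pow_ne_zero _ (by norm_num))]
  rw [hroot_iff]
  exact eval_eq_zero_iff_of_injective (charpoly_monic M).ne_zero (by simp) hc.injective
    (fun i => (hroot_iff _).1 (hroots i)) x
end

section
/- With M = B + 2λ A B^{1/2} 𝟙𝟙ᵀ as above, if c is an eigenvalue of M with c ∉ {b_1,...,b_n}, then the vector v with v_k = a_k √(b_k)/(c - b_k) is an eigenvector of M for the eigenvalue c. -/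
/-!
Write `M = diag b + w uᵀ` with `wₖ = aₖ √bₖ` and `u = 2λ 𝟙`. For `c ∉ {bₖ}` the matrix
determinant lemma turns `det (M - c) = 0` into the secular equation `∑ₖ uₖ wₖ / (c - bₖ) = 1`,
i.e. `u ⬝ v = 1`. Then `(M v)ₖ = bₖ vₖ + wₖ (u ⬝ v) = bₖ vₖ + (c - bₖ) vₖ = c vₖ`, and `u ⬝ v = 1`
also rules out `v = 0`.
-/

open Matrix

namespace Matrix

variable {ι K : Type*} [Fintype ι] [DecidableEq ι] [Field K]

theorem det_diagonal_add_vecMulVec {d : ι → K} (hd : ∀ i, d i ≠ 0) (w u : ι → K) :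
    (diagonal d + vecMulVec w u).det = (∏ i, d i) * (1 + ∑ i, u i * w i / d i) := by
  have hfactor : diagonal d + vecMulVec w u = diagonal d * (1 + vecMulVec (w / d) u) := by
    rw [Matrix.mul_add, Matrix.mul_one]
    congr 1
    ext i j
    have := hd i
    rw [diagonal_mul, vecMulVec_apply, vecMulVec_apply, Pi.div_apply]
    field_simp
  rw [hfactor, det_mul, det_diagonal, vecMulVec_eq Unit, det_one_add_replicateCol_mul_replicateRow]
  simp [dotProduct, mul_div_assoc]

theorem dotProduct_div_sub_eq_one_of_det_eq_zero {d w u : ι → K} {c : K} (hcd : ∀ i, c ≠ d i)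
    (hc : (diagonal d + vecMulVec w u - c • (1 : Matrix ι ι K)).det = 0) :
    u ⬝ᵥ (fun i ↦ w i / (c - d i)) = 1 := by
  have hdc : ∀ i, d i - c ≠ 0 := fun i ↦ sub_ne_zero.mpr (hcd i).symm
  have hshift : diagonal d + vecMulVec w u - c • (1 : Matrix ι ι K) =
      diagonal (fun i ↦ d i - c) + vecMulVec w u := by
    rw [add_sub_right_comm, smul_one_eq_diagonal, diagonal_sub]
  rw [hshift, det_diagonal_add_vecMulVec hdc, mul_eq_zero] at hc
  have hsecular := hc.resolve_left (Finset.prod_ne_zero_iff.mpr fun i _ ↦ hdc i)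
  have hflip : ∑ i, u i * w i / (d i - c) = -(u ⬝ᵥ fun i ↦ w i / (c - d i)) := by
    rw [dotProduct, ← Finset.sum_neg_distrib]
    refine Finset.sum_congr rfl fun i _ ↦ ?_
    rw [← neg_sub c, div_neg, mul_div_assoc]
  linear_combination -hsecular + hflip

theorem diagonal_add_vecMulVec_mulVec_eq_smul {d w u x : ι → K} {c : K}
    (hx : ∀ i, (c - d i) * x i = w i) (hux : u ⬝ᵥ x = 1) :
    (diagonal d + vecMulVec w u) *ᵥ x = c • x := by
  ext i
  simp only [add_mulVec, vecMulVec_mulVec, hux, MulOpposite.op_one, one_smul, Pi.add_apply,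
    mulVec_diagonal, Pi.smul_apply, smul_eq_mul]
  linear_combination (hx i).symm

end Matrix

theorem stmt11_general (n : ℕ) (a b : Fin n → ℝ) (lam : ℝ)
    (M : Matrix (Fin n) (Fin n) ℝ)
    (hM : ∀ i j, M i j = (if i = j then b i else 0) + 2 * lam * a i * Real.sqrt (b i))
    (c : ℝ) (hcb : ∀ i, c ≠ b i)
    (hc : (M - c • (1 : Matrix (Fin n) (Fin n) ℝ)).det = 0)
    (v : Fin n → ℝ) (hv : ∀ k, v k = a k * Real.sqrt (b k) / (c - b k)) :
    M.mulVec v = c • v ∧ v ≠ 0 := by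
  have hMdecomp : M = diagonal b + vecMulVec (fun i ↦ a i * √(b i)) (fun _ ↦ 2 * lam) := by
    ext i j
    rw [hM, Matrix.add_apply, diagonal_apply, vecMulVec_apply]
    ring
  obtain rfl : v = fun k ↦ a k * √(b k) / (c - b k) := funext hv
  subst hMdecomp
  have hsecular := dotProduct_div_sub_eq_one_of_det_eq_zero hcb hc
  refine ⟨diagonal_add_vecMulVec_mulVec_eq_smul
    (fun i ↦ mul_div_cancel₀ _ (sub_ne_zero.mpr (hcb i))) hsecular, fun hzero ↦ ?_⟩
  rw [hzero, dotProduct_zero] at hsecular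
  exact zero_ne_one hsecular

/-- if `c` is an eigenvalue of `M = B + 2λ A B^{1/2} 𝟙𝟙ᵀ` with
`c ∉ {b₁,…,bₙ}`, then `v` with `vₖ = aₖ √(bₖ)/(c - bₖ)` is a corresponding eigenvector. -/
theorem stmt11 (n : ℕ) (hn : 1 ≤ n) (a b : Fin n → ℝ) (lam : ℝ)
    (ha : ∀ i, 0 < a i) (hb : ∀ i, 0 < b i) (hbdist : Function.Injective b) (hlam : 0 < lam)
    (M : Matrix (Fin n) (Fin n) ℝ)
    (hM : ∀ i j, M i j = (if i = j then b i else 0) + 2 * lam * a i * Real.sqrt (b i))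
    (c : ℝ) (hcb : ∀ i, c ≠ b i)
    (hc : (M - c • (1 : Matrix (Fin n) (Fin n) ℝ)).det = 0)
    (v : Fin n → ℝ) (hv : ∀ k, v k = a k * Real.sqrt (b k) / (c - b k)) :
    M.mulVec v = c • v ∧ v ≠ 0 :=
  stmt11_general n a b lam M hM c hcb hc v hv
end

section
/- Let U be an n×n real matrix all of whose off-diagonal entries are nonpositive (a Z-matrix). If U is positive definite (i.e., U is symmetric with xᵀUx > 0 for x ≠ 0), then U is invertible and all entries of U⁻¹ are nonnegative. -/
/-!
Write `x = x⁺ - x⁻`. Since the off-diagonal entries of `U` are nonpositive and `x⁺`, `x⁻` have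
disjoint supports, `x⁻ ⬝ᵥ U *ᵥ x⁺ ≤ 0`. Hence if `U *ᵥ x ≥ 0`, then
`x⁻ ⬝ᵥ U *ᵥ x⁻ = x⁻ ⬝ᵥ U *ᵥ x⁺ - x⁻ ⬝ᵥ U *ᵥ x ≤ 0`, which forces `x⁻ = 0` by positive
definiteness. Applied to the columns of `U⁻¹`, for which `U *ᵥ x` is a standard basis vector,
this gives `U⁻¹ ≥ 0`.
-/

namespace Matrix

variable {ι R : Type*} [Fintype ι]

theorem dotProduct_mulVec_nonpos_of_offDiag_nonpos [CommRing R] [PartialOrder R]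
    [IsOrderedRing R] {A : Matrix ι ι R} (hZ : ∀ i j, i ≠ j → A i j ≤ 0) {p m : ι → R}
    (hp : 0 ≤ p) (hm : 0 ≤ m) (hmp : ∀ k, m k * p k = 0) : m ⬝ᵥ A *ᵥ p ≤ 0 := by
  simp only [dotProduct, mulVec, Finset.mul_sum]
  refine Finset.sum_nonpos fun i _ => Finset.sum_nonpos fun j _ => ?_
  obtain rfl | hij := eq_or_ne i j
  · rw [mul_left_comm, hmp, mul_zero]
  · exact mul_nonpos_of_nonneg_of_nonpos (hm i)
      (mul_nonpos_of_nonpos_of_nonneg (hZ i j hij) (hp j))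

variable [Field R] [LinearOrder R] [IsStrictOrderedRing R] [StarRing R] [TrivialStar R]

theorem PosDef.nonneg_of_mulVec_nonneg_of_offDiag_nonpos {A : Matrix ι ι R} (hA : A.PosDef)
    (hZ : ∀ i j, i ≠ j → A i j ≤ 0) {x : ι → R} (hx : 0 ≤ A *ᵥ x) : 0 ≤ x := by
  rw [← negPart_eq_zero]
  by_contra hne
  have hpos : 0 < x⁻ ⬝ᵥ A *ᵥ x⁻ := by simpa using hA.dotProduct_mulVec_pos hne
  have hcross : x⁻ ⬝ᵥ A *ᵥ x⁺ ≤ 0 :=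
    dotProduct_mulVec_nonpos_of_offDiag_nonpos hZ (posPart_nonneg x) (negPart_nonneg x)
      fun k => by
        rcases le_total (x k) 0 with h | h
        · simp [posPart_eq_zero.2 h]
        · simp [negPart_eq_zero.2 h]
  have hsplit : x⁻ ⬝ᵥ A *ᵥ x = x⁻ ⬝ᵥ A *ᵥ x⁺ - x⁻ ⬝ᵥ A *ᵥ x⁻ := by
    rw [← dotProduct_sub, ← mulVec_sub, posPart_sub_negPart]
  have hnonneg : 0 ≤ x⁻ ⬝ᵥ A *ᵥ x := dotProduct_nonneg_of_nonneg (negPart_nonneg x) hx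
  linarith

theorem PosDef.inv_nonneg_of_offDiag_nonpos [DecidableEq ι] {A : Matrix ι ι R} (hA : A.PosDef)
    (hZ : ∀ i j, i ≠ j → A i j ≤ 0) (i j : ι) : 0 ≤ A⁻¹ i j := by
  have hcol : A *ᵥ (A⁻¹ *ᵥ Pi.single j 1) = Pi.single j 1 := by
    rw [mulVec_mulVec, mul_nonsing_inv A ((isUnit_iff_isUnit_det A).1 hA.isUnit), one_mulVec]
  have hcol_nonneg := hA.nonneg_of_mulVec_nonneg_of_offDiag_nonpos hZ
    (hcol ▸ Pi.single_nonneg.2 zero_le_one) i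
  simpa [mulVec_single_one] using hcol_nonneg

end Matrix

/-- a symmetric positive definite Z-matrix (all off-diagonal entries
nonpositive) is invertible with entrywise nonnegative inverse. -/
theorem stmt13 (n : ℕ) (U : Matrix (Fin n) (Fin n) ℝ)
    (hZ : ∀ i j, i ≠ j → U i j ≤ 0) (hU : U.PosDef) :
    IsUnit U.det ∧ ∀ i j, 0 ≤ U⁻¹ i j :=
  ⟨(Matrix.isUnit_iff_isUnit_det U).1 hU.isUnit, hU.inv_nonneg_of_offDiag_nonpos hZ⟩
end
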